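/- Let p, a, b, c ∈ ℝ³ with a, b, c affinely independent. The quantity |(a − p) · ((b − p) × (c − p))| equals six times the volume (Lebesgue measure) of the tetrahedron with vertices p, a, b, c. -/

import Mathlib

/-! The unit cube `[0,1]ⁿ` is the union of the `n!` order simplices `{y | Monotone (y ∘ σ)}`,
which are congruent under permutations of the coordinates and overlap only in the null set of
non-injective points, so each has volume `1/n!`. The partial-sum map `x ↦ (∑_{j ≤ i} x j)_i` has
determinant `1` and pulls the order simplex back to the corner simplex `{x ≥ 0, ∑ x ≤ 1}`, the
convex hull of `0` and the standard basis. The simplex with vertices `p, p + v 0, …, p + v (n-1)`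
is the image of the corner simplex under `x ↦ p + vᵀ x`, which scales volume by `|det v|`; for
`n = 3` that determinant is the triple product. -/

open Matrix MeasureTheory

namespace SimplexVolume

open Finset

variable {n : ℕ}

def cornerSimplex (n : ℕ) : Set (Fin n → ℝ) := {x | 0 ≤ x ∧ ∑ i, x i ≤ 1}

def orderSimplex (σ : Equiv.Perm (Fin n)) : Set (Fin n → ℝ) :=
  Set.Icc 0 1 ∩ {y | Monotone (y ∘ σ)}

def partialSumMatrix (n : ℕ) : Matrix (Fin n) (Fin n) ℝ := of fun i j => if j ≤ i then 1 else 0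

lemma det_partialSumMatrix : (partialSumMatrix n).det = 1 := by
  rw [det_of_isLowerTriangular (partialSumMatrix n)
    fun i j (hij : i < j) => if_neg (not_le.2 hij)]
  simp [partialSumMatrix]

lemma partialSumMatrix_mulVec (x : Fin n → ℝ) :
    partialSumMatrix n *ᵥ x = fun i => ∑ j ∈ Iic i, x j := by
  ext i
  simp [partialSumMatrix, mulVec, dotProduct, ite_mul, Finset.sum_ite, filter_ge_eq_Iic]

lemma nonneg_of_monotone_partialSums {x : Fin n → ℝ} (h0 : ∀ i, 0 ≤ ∑ j ∈ Iic i, x j)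
    (hmono : Monotone fun i => ∑ j ∈ Iic i, x j) (i : Fin n) : 0 ≤ x i := by
  have hsplit : ∑ j ∈ Iic i, x j = x i + ∑ j ∈ Iio i, x j := by
    rw [Iic_eq_cons_Iio, sum_cons]
  by_cases hi : IsMin i
  · simpa [hsplit, Iio_eq_empty.2 hi] using h0 i
  · have : ∑ j ∈ Iic (Order.pred i), x j ≤ ∑ j ∈ Iic i, x j := hmono (Order.pred_le i)
    rw [Iic_pred_eq_Iio_of_not_isMin hi] at this
    linarith

lemma preimage_partialSumMatrix_orderSimplex :
    toLin' (partialSumMatrix n) ⁻¹' orderSimplex 1 = cornerSimplex n := by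
  ext x
  simp only [orderSimplex, cornerSimplex, Set.mem_preimage, Set.mem_inter_iff, Set.mem_Icc,
    Set.mem_ofPred_eq, toLin'_apply, Equiv.Perm.coe_one, Function.comp_id, Pi.le_def,
    Pi.zero_apply, Pi.one_apply, partialSumMatrix_mulVec]
  constructor
  · rintro ⟨⟨h0, h1⟩, hmono⟩
    refine ⟨nonneg_of_monotone_partialSums h0 hmono, ?_⟩
    rcases n with _ | m
    · simp
    · simpa [← Fin.top_eq_last, Iic_top] using h1 (Fin.last m)
  · rintro ⟨h0, h1⟩
    have hsub : ∀ {s t : Finset (Fin n)}, s ⊆ t → ∑ j ∈ s, x j ≤ ∑ j ∈ t, x j :=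
      fun hst => sum_le_sum_of_subset_of_nonneg hst fun j _ _ => h0 j
    exact ⟨⟨fun i => sum_nonneg fun j _ => h0 j, fun i => (hsub (subset_univ _)).trans h1⟩,
      fun i j hij => hsub (Iic_subset_Iic.2 hij)⟩

lemma convex_cornerSimplex : Convex ℝ (cornerSimplex n) :=
  (convex_Ici 0).inter (convex_halfSpace_le (f := fun x : Fin n → ℝ => ∑ i, x i)
    ⟨fun x y => by simp [sum_add_distrib], fun c x => by simp [mul_sum]⟩ 1)

lemma convexHull_insert_zero_basis :
    convexHull ℝ (insert 0 (Set.range fun i j : Fin n => if i = j then (1 : ℝ) else 0))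
      = cornerSimplex n := by
  set B := Set.range fun i j : Fin n => if i = j then (1 : ℝ) else 0
  apply (convexHull_min ?_ convex_cornerSimplex).antisymm
  · rintro x ⟨hx, hsum⟩
    set t := ∑ i, x i
    have hzero : (0 : Fin n → ℝ) ∈ convexHull ℝ (insert 0 B) :=
      subset_convexHull ℝ _ (Set.mem_insert _ _)
    rcases (sum_nonneg fun i _ => hx i : 0 ≤ t).eq_or_lt with ht | ht
    · have : x = 0 := funext fun i =>
        (sum_eq_zero_iff_of_nonneg fun i _ => hx i).1 ht.symm i (mem_univ i)
      exact this ▸ hzero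
    · have hstd : t⁻¹ • x ∈ stdSimplex ℝ (Fin n) :=
        ⟨fun i => mul_nonneg (inv_nonneg.2 ht.le) (hx i), by
          simp [← mul_sum, t, inv_mul_cancel₀ ht.ne']⟩
      rw [← convexHull_basis_eq_stdSimplex] at hstd
      have := (convex_convexHull ℝ _).smul_mem_of_zero_mem hzero
        (convexHull_mono (Set.subset_insert _ _) hstd) ⟨ht.le, hsum⟩
      rwa [smul_inv_smul₀ ht.ne'] at this
  · rintro _ (rfl | ⟨i, rfl⟩)
    · exact ⟨le_rfl, by simp⟩
    · refine ⟨fun j => ?_, by simp⟩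
      dsimp only; split_ifs <;> norm_num

lemma measurableSet_orderSimplex (σ : Equiv.Perm (Fin n)) : MeasurableSet (orderSimplex σ) := by
  refine measurableSet_Icc.inter ?_
  have : {y : Fin n → ℝ | Monotone (y ∘ σ)} = ⋂ (i) (j) (_ : i ≤ j), {y | y (σ i) ≤ y (σ j)} := by
    ext y; simp [Monotone]
  rw [this]
  exact .iInter fun i => .iInter fun j => .iInter fun _ =>
    measurableSet_le (measurable_pi_apply _) (measurable_pi_apply _)

lemma volume_orderSimplex_eq (σ : Equiv.Perm (Fin n)) :
    volume (orderSimplex σ) = volume (orderSimplex (1 : Equiv.Perm (Fin n))) := by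
  set φ := MeasurableEquiv.piCongrLeft (fun _ : Fin n => ℝ) σ.symm
  have hφ : ∀ y, φ y = y ∘ σ := fun y => funext fun i => by
    simp [φ, MeasurableEquiv.coe_piCongrLeft, Equiv.piCongrLeft_apply, eq_rec_constant]
  have hpre : orderSimplex σ = φ ⁻¹' orderSimplex 1 := by
    ext y
    simp only [orderSimplex, Set.mem_preimage, Set.mem_inter_iff, Set.mem_Icc, Pi.le_def,
      Set.mem_ofPred_eq, Equiv.Perm.coe_one, Function.comp_id, hφ, Function.comp_apply]
    refine and_congr (and_congr ?_ ?_) Iff.rfl <;> exact σ.forall_congr_right.symm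
  rw [hpre, (volume_measurePreserving_piCongrLeft _ _).measure_preimage
    (measurableSet_orderSimplex 1).nullMeasurableSet]

lemma iUnion_orderSimplex : ⋃ σ : Equiv.Perm (Fin n), orderSimplex σ = Set.Icc 0 1 :=
  (Set.iUnion_subset fun _ => Set.inter_subset_left).antisymm fun y hy =>
    Set.mem_iUnion.2 ⟨Tuple.sort y, hy, Tuple.monotone_sort y⟩

lemma volume_setOf_not_injective {ι : Type*} [Fintype ι] :
    volume {y : ι → ℝ | ¬ Function.Injective y} = 0 := by
  classical
  have hsub : {y : ι → ℝ | ¬ Function.Injective y} ⊆ ⋃ (i) (j) (_ : i ≠ j),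
      (LinearMap.ker ((LinearMap.proj i : (ι → ℝ) →ₗ[ℝ] ℝ) - LinearMap.proj j) : Set (ι → ℝ)) := by
    intro y hy
    obtain ⟨i, j, hij, hne⟩ := by simpa [Function.Injective] using hy
    simp only [Set.mem_iUnion]
    exact ⟨i, j, hne, by simp [hij]⟩
  refine measure_mono_null hsub <| measure_iUnion_null fun i => measure_iUnion_null fun j =>
    measure_iUnion_null fun hij => Measure.addHaar_submodule _ _ fun htop => ?_
  have := htop ▸ Submodule.mem_top (x := Pi.single i (1 : ℝ))
  simp [hij.symm] at this

lemma aedisjoint_orderSimplex :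
    Pairwise (Function.onFun (AEDisjoint volume) (orderSimplex (n := n))) :=
  fun σ τ hστ => measure_mono_null (by
    rintro y ⟨⟨-, hσ⟩, -, hτ⟩ hinj
    exact hστ <| Equiv.ext fun i => hinj (congrFun (Tuple.unique_monotone hσ hτ) i))
    volume_setOf_not_injective

lemma volume_orderSimplex_one :
    volume (orderSimplex (1 : Equiv.Perm (Fin n))) = (n.factorial : ENNReal)⁻¹ := by
  have hcube : (n.factorial : ENNReal) * volume (orderSimplex (1 : Equiv.Perm (Fin n))) = 1 := by
    have := measure_iUnion₀ (aedisjoint_orderSimplex (n := n)) fun σ =>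
      (measurableSet_orderSimplex σ).nullMeasurableSet
    rw [iUnion_orderSimplex, Real.volume_Icc_pi, tsum_fintype] at this
    simpa [volume_orderSimplex_eq, Fintype.card_perm] using this.symm
  exact ENNReal.eq_inv_of_mul_eq_one_left (by rw [mul_comm, hcube])

lemma volume_cornerSimplex : volume (cornerSimplex n) = (n.factorial : ENNReal)⁻¹ := by
  rw [← preimage_partialSumMatrix_orderSimplex, Measure.addHaar_preimage_linearMap,
    LinearMap.det_toLin', det_partialSumMatrix, volume_orderSimplex_one] <;>
    simp [det_partialSumMatrix]

open scoped Pointwise in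
theorem volume_convexHull_insert_range (p : Fin n → ℝ) (v : Fin n → Fin n → ℝ) :
    volume (convexHull ℝ (insert p (Set.range fun i => p + v i)))
      = ENNReal.ofReal |(of v).det| / n.factorial := by
  set M := toLin' (of v)ᵀ
  have hM : (M ∘ fun i j => if i = j then (1 : ℝ) else 0) = v := by
    ext i k; simp [M, mulVec, dotProduct]
  have hvertices : insert p (Set.range fun i => p + v i)
      = p +ᵥ M '' insert 0 (Set.range fun i j => if i = j then (1 : ℝ) else 0) := by
    rw [Set.image_insert_eq, map_zero, ← Set.range_comp, hM, ← Set.image_vadd,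
      Set.image_insert_eq, ← Set.range_comp]
    simp [Function.comp_def]
  rw [hvertices, convexHull_vadd, ← M.image_convexHull, measure_vadd,
    Measure.addHaar_image_linearMap, convexHull_insert_zero_basis, volume_cornerSimplex,
    LinearMap.det_toLin', det_transpose, div_eq_mul_inv]

end SimplexVolume

theorem stmt6_general (p a b c : Fin 3 → ℝ) :
    |(a - p) ⬝ᵥ ((b - p) ⨯₃ (c - p))|
      = 6 * (volume (convexHull ℝ {p, a, b, c})).toReal := by
  have hvertices : ({p, a, b, c} : Set (Fin 3 → ℝ))
      = insert p (Set.range fun i => p + ![a - p, b - p, c - p] i) := by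
    ext x; simp [Fin.exists_fin_succ, eq_comm]
  rw [hvertices, SimplexVolume.volume_convexHull_insert_range, triple_product_eq_det]
  simp [Nat.factorial, mul_div_cancel₀]
  rfl

theorem stmt6 (p a b c : Fin 3 → ℝ) (h : AffineIndependent ℝ ![a, b, c]) :
    |(a - p) ⬝ᵥ ((b - p) ⨯₃ (c - p))|
      = 6 * (volume (convexHull ℝ {p, a, b, c})).toReal :=
  stmt6_general p a b c
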